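/- The harmonic mean density is the stationary point of the weighted average Pearson χ² divergence: if p_h(x) satisfies p_h(x) · Σᵢ ωᵢ/pᵢ(x) = 1 for all x (with Σωᵢ = 1), then p_h minimizes J(q) = Σᵢ ωᵢ · (1/2)∫ (q(x) − pᵢ(x))²/pᵢ(x) dx over all nonnegative functions q. In particular, for any nonnegative measurable q, J(q) ≥ J(p_h). -/

import Mathlib

/-! Pointwise, `Σ ωᵢ (t - pᵢ)² / pᵢ = S t² - 2 t + Σ ωᵢ pᵢ` with `S = Σ ωᵢ / pᵢ`, a quadratic in `t`
whose minimiser is `1 / S = p_h`; completing the square gives an excess of exactly `S (t - p_h)² ≥ 0`,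
and integrating this pointwise inequality proves the theorem. -/

open MeasureTheory Finset

section PointwiseChiSq

variable {ι : Type*} [Fintype ι] (ω p : ι → ℝ) {h : ℝ}

theorem sum_weighted_chi_sq_eq_add_sq (hp : ∀ i, p i ≠ 0) (hω : ∑ i, ω i = 1)
    (hh : h * ∑ i, ω i / p i = 1) (t : ℝ) :
    ∑ i, ω i * ((t - p i) ^ 2 / p i)
      = ∑ i, ω i * ((h - p i) ^ 2 / p i) + (∑ i, ω i / p i) * (t - h) ^ 2 := by
  have expand : ∀ s, ∑ i, ω i * ((s - p i) ^ 2 / p i)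
      = s ^ 2 * ∑ i, ω i / p i - 2 * s * ∑ i, ω i + ∑ i, ω i * p i := by
    intro s
    rw [mul_sum, mul_sum, ← sum_sub_distrib, ← sum_add_distrib]
    refine sum_congr rfl fun i _ => ?_
    field_simp [hp i]
    ring
  rw [expand, expand, hω]
  linear_combination (2 * t - 2 * h) * hh

theorem sum_weighted_chi_sq_le (hp : ∀ i, 0 < p i) (hω₀ : ∀ i, 0 ≤ ω i) (hω : ∑ i, ω i = 1)
    (hh : h * ∑ i, ω i / p i = 1) (t : ℝ) :
    ∑ i, ω i * ((h - p i) ^ 2 / p i) ≤ ∑ i, ω i * ((t - p i) ^ 2 / p i) := by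
  rw [sum_weighted_chi_sq_eq_add_sq ω p (fun i => (hp i).ne') hω hh t, le_add_iff_nonneg_right]
  have hS : 0 ≤ ∑ i, ω i / p i := sum_nonneg fun i _ => div_nonneg (hω₀ i) (hp i).le
  positivity

end PointwiseChiSq

theorem sum_mul_half_integral_eq {α ι : Type*} [MeasurableSpace α] [Fintype ι] {μ : Measure α}
    (ω : ι → ℝ) {f : ι → α → ℝ} (hf : ∀ i, Integrable (f i) μ) :
    ∑ i, ω i * ((1 / 2) * ∫ x, f i x ∂μ) = (1 / 2) * ∫ x, ∑ i, ω i * f i x ∂μ := by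
  rw [integral_finsetSum _ fun i _ => (hf i).const_mul (ω i), mul_sum]
  refine sum_congr rfl fun i _ => ?_
  rw [integral_const_mul]
  ring

theorem hmd_minimizes_average_pearson_chi_sq_general
    (n N : ℕ) (p : Fin N → (Fin n → ℝ) → ℝ)
    (hppos : ∀ i x, 0 < p i x)
    (ω : Fin N → ℝ) (hω : ∀ i, 0 < ω i) (hωsum : ∑ i, ω i = 1)
    (ph : (Fin n → ℝ) → ℝ)
    (hph : ∀ x, ph x * ∑ i, ω i / p i x = 1)
    (hIph : ∀ i, Integrable (fun x => (ph x - p i x) ^ 2 / p i x)) :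
    ∀ q : (Fin n → ℝ) → ℝ, Measurable q → (∀ x, 0 ≤ q x) →
      (∀ i, Integrable (fun x => (q x - p i x) ^ 2 / p i x)) →
      (∑ i, ω i * ((1 / 2) * ∫ x, (ph x - p i x) ^ 2 / p i x))
        ≤ ∑ i, ω i * ((1 / 2) * ∫ x, (q x - p i x) ^ 2 / p i x) := by
  intro q _ _ hIq
  rw [sum_mul_half_integral_eq ω hIph, sum_mul_half_integral_eq ω hIq]
  refine mul_le_mul_of_nonneg_left (integral_mono ?_ ?_ fun x => ?_) (by norm_num)
  · exact integrable_finsetSum _ fun i _ => (hIph i).const_mul (ω i)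
  · exact integrable_finsetSum _ fun i _ => (hIq i).const_mul (ω i)
  · exact sum_weighted_chi_sq_le ω (p · x) (hppos · x) (fun i => (hω i).le) hωsum (hph x) (q x)

theorem hmd_minimizes_average_pearson_chi_sq
    (n N : ℕ) (p : Fin N → (Fin n → ℝ) → ℝ)
    (hp : ∀ i, Measurable (p i)) (hppos : ∀ i x, 0 < p i x)
    (hpdf : ∀ i, ∫ x, p i x = 1)
    (ω : Fin N → ℝ) (hω : ∀ i, 0 < ω i) (hωsum : ∑ i, ω i = 1)
    (ph : (Fin n → ℝ) → ℝ)
    (hph : ∀ x, ph x * ∑ i, ω i / p i x = 1)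
    (hIph : ∀ i, Integrable (fun x => (ph x - p i x) ^ 2 / p i x)) :
    ∀ q : (Fin n → ℝ) → ℝ, Measurable q → (∀ x, 0 ≤ q x) →
      (∀ i, Integrable (fun x => (q x - p i x) ^ 2 / p i x)) →
      (∑ i, ω i * ((1 / 2) * ∫ x, (ph x - p i x) ^ 2 / p i x))
        ≤ ∑ i, ω i * ((1 / 2) * ∫ x, (q x - p i x) ^ 2 / p i x) :=
  hmd_minimizes_average_pearson_chi_sq_general n N p hppos ω hω hωsum ph hph hIph
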